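/- The stabilizer of the lattice A·ℤ^n inside the hyperoctahedral group (realized as signed permutation matrices S with S·A·ℤ^n = A·ℤ^n) is a cyclic group of order 2n, generated by the signed permutation matrix S_0 with (S_0)_{i+1,i} = 1 for i < n and (S_0)_{1,n} = −1. -/

import Mathlib

/-- The matrix `A` with `q` on the diagonal, `-p` on the subdiagonal,
`p` in the top-right corner (entry `(1,n)`), and `0` elsewhere. -/
def tilingMatrix (p q : ℝ) (n : ℕ) : Matrix (Fin n) (Fin n) ℝ :=
  Matrix.of fun i j =>
    if (i : ℕ) = (j : ℕ) then q
    else if (i : ℕ) = (j : ℕ) + 1 then -p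
    else if (i : ℕ) = 0 ∧ (j : ℕ) = n - 1 then p
    else 0

/-- The lattice `A·ℤⁿ` of integer linear combinations of the columns of `A`. -/
def latticeA (p q : ℝ) (n : ℕ) : Set (Fin n → ℝ) :=
  {x | ∃ z : Fin n → ℤ, x = (tilingMatrix p q n).mulVec fun i => (z i : ℝ)}

/-- A signed permutation matrix: all entries in `{0, ±1}`, with exactly one
nonzero entry in each row and each column. -/
def IsSignedPerm {n : ℕ} (S : Matrix (Fin n) (Fin n) ℝ) : Prop :=
  (∀ i j, S i j = 0 ∨ S i j = 1 ∨ S i j = -1) ∧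
    (∀ i, ∃! j, S i j ≠ 0) ∧ (∀ j, ∃! i, S i j ≠ 0)

/-- The signed permutation matrix `S₀` with `(S₀)_{i+1,i} = 1` for `i < n`
and `(S₀)_{1,n} = -1`. -/
def cycGen (n : ℕ) : Matrix (Fin n) (Fin n) ℝ :=
  Matrix.of fun i j =>
    if (i : ℕ) = (j : ℕ) + 1 then 1
    else if (i : ℕ) = 0 ∧ (j : ℕ) = n - 1 then -1
    else 0

/-!
Write `A = q • 1 - p • S₀`, where `S₀ = cycGen n` is the negacyclic shift, an orthogonal matrix.
For `z ∈ ℤⁿ` one gets `‖A z‖² = (p² + q²)‖z‖² - 2pq ⟪z, S₀ z⟫`, and `⟪z, S₀ z⟫ ≤ ‖z‖² - 1` for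
`z ≠ 0` because `S₀` has no fixed vector and both products are integers. Since `p ≠ q`, the
lattice vectors of squared length `p² + q²` are therefore exactly the `± A eⱼ`. A signed
permutation `S` preserving the lattice maps `A eⱼ = q eⱼ - p S₀ eⱼ` to some `± (q eₖ - p S₀ eₖ)`,
and comparing the entries of size `q` and `p` gives `S (S₀ eⱼ) = S₀ (S eⱼ)`, i.e. `S` commutes
with `S₀`. Finally `e₀` is a cyclic vector of `S₀` whose orbit is the `2n` signed basis vectors,
so `S` is the power of `S₀` that agrees with it on `e₀`.
-/

open Matrix

theorem exists_eq_single_of_dotProduct_self_eq_one {ι : Type*} [Fintype ι] [DecidableEq ι]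
    {z : ι → ℤ} (h : z ⬝ᵥ z = 1) : ∃ k, |z k| = 1 ∧ z = Pi.single k (z k) := by
  obtain ⟨k, hk⟩ : ∃ k, z k ≠ 0 := by
    by_contra! hz
    simp [show z = 0 from funext hz] at h
  have hsplit : z k * z k + ∑ i ∈ Finset.univ.erase k, z i * z i = 1 :=
    (Finset.add_sum_erase _ _ (Finset.mem_univ k)).trans h
  have hrest : 0 ≤ ∑ i ∈ Finset.univ.erase k, z i * z i :=
    Finset.sum_nonneg fun i _ => mul_self_nonneg _
  have hk1 : 0 < z k * z k := mul_self_pos.mpr hk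
  have hrest0 := (Finset.sum_eq_zero_iff_of_nonneg fun i _ => mul_self_nonneg (z i)).mp
    (show ∑ i ∈ Finset.univ.erase k, z i * z i = 0 by omega)
  refine ⟨k, ?_, funext fun i => ?_⟩
  · rcases Int.eq_one_or_neg_one_of_mul_eq_one (show z k * z k = 1 by omega) with h1 | h1 <;>
      simp [h1]
  · by_cases hi : i = k
    · subst hi; simp
    · simp [hi, mul_self_eq_zero.mp (hrest0 i (by simp [hi]))]

theorem single_eq_of_smul_sub_smul_single_eq {ι : Type*} [DecidableEq ι] {p q : ℝ}
    (hq : 0 < q) (hqp : q < p) {a b c d : ι} {ε δ η θ : ℝ} (hε : |ε| = 1) (hθ : |θ| = 1)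
    (hab : a ≠ b) (hcd : c ≠ d)
    (h : q • Pi.single a ε - p • Pi.single b δ
      = q • Pi.single c η - p • (Pi.single d θ : ι → ℝ)) :
    (Pi.single a ε : ι → ℝ) = Pi.single c η ∧ (Pi.single b δ : ι → ℝ) = Pi.single d θ := by
  have ha := congrFun h a
  simp only [Pi.sub_apply, Pi.smul_apply, smul_eq_mul, Pi.single_eq_same,
    Pi.single_eq_of_ne hab, mul_zero, sub_zero] at ha
  have hac : a = c := by
    by_contra hac
    rw [Pi.single_eq_of_ne hac, mul_zero, zero_sub] at ha
    by_cases had : a = d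
    · subst had
      have := congrArg abs ha
      rw [Pi.single_eq_same, abs_neg, abs_mul, abs_mul, hε, hθ, abs_of_pos hq,
        abs_of_pos (hq.trans hqp)] at this
      linarith
    · rw [Pi.single_eq_of_ne had, mul_zero, neg_zero, mul_eq_zero] at ha
      rcases ha with ha | ha
      · exact hq.ne' ha
      · simp [ha] at hε
  subst hac
  rw [Pi.single_eq_same, Pi.single_eq_of_ne hcd, mul_zero, sub_zero] at ha
  have hu : (Pi.single a ε : ι → ℝ) = Pi.single a η := by rw [mul_left_cancel₀ hq.ne' ha]
  rw [hu, sub_right_inj] at h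
  exact ⟨hu, smul_right_injective _ (hq.trans hqp).ne' h⟩

theorem ne_of_single_dotProduct_single_eq_zero {ι : Type*} [Fintype ι] [DecidableEq ι]
    {a b : ι} {x y : ℝ} (hx : x ≠ 0) (hy : y ≠ 0) (h : Pi.single a x ⬝ᵥ Pi.single b y = 0) :
    a ≠ b := by
  rintro rfl
  simp [hx, hy] at h

section SignedPerm

variable {n : ℕ} {S T : Matrix (Fin n) (Fin n) ℝ}

theorem mulVec_eq_of_apply_eq {σ : Equiv.Perm (Fin n)} {s : Fin n → ℤˣ}
    (h : ∀ i j, S i j = if σ i = j then ((s i : ℤ) : ℝ) else 0) (x : Fin n → ℝ) :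
    S *ᵥ x = fun i => ((s i : ℤ) : ℝ) * x (σ i) := by
  funext i
  simp [mulVec, dotProduct, h, ite_mul]

theorem IsSignedPerm.exists_mulVec_eq (hS : IsSignedPerm S) :
    ∃ (σ : Equiv.Perm (Fin n)) (s : Fin n → ℤˣ),
      ∀ x, S *ᵥ x = fun i => ((s i : ℤ) : ℝ) * x (σ i) := by
  obtain ⟨hval, hrow, hcol⟩ := hS
  choose σ hσ hσ_unique using hrow
  have hinj : Function.Injective σ := fun i i' hii' =>
    (hcol (σ i)).unique (hσ i) (hii' ▸ hσ i')
  refine ⟨Equiv.ofBijective σ (Finite.injective_iff_bijective.mp hinj),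
    fun i => if S i (σ i) = 1 then 1 else -1, mulVec_eq_of_apply_eq fun i j => ?_⟩
  simp only [Equiv.ofBijective_apply]
  split_ifs with hij h1
  · subst hij; simp [h1]
  · subst hij
    rcases hval i (σ i) with h | h | h
    exacts [absurd h (hσ i), absurd h h1, by simp [h]]
  · by_contra hne
    exact hij (hσ_unique i j hne).symm

theorem isSignedPerm_of_mulVec_eq (σ : Equiv.Perm (Fin n)) (s : Fin n → ℤˣ)
    (h : ∀ x, S *ᵥ x = fun i => ((s i : ℤ) : ℝ) * x (σ i)) : IsSignedPerm S := by
  have hS : ∀ i j, S i j = if σ i = j then ((s i : ℤ) : ℝ) else 0 := fun i j => by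
    have := congrFun (h (Pi.single j 1)) i
    rw [mulVec_single_one] at this
    simpa [Pi.single_apply] using this
  refine ⟨fun i j => ?_, fun i => ⟨σ i, ?_, fun j hj => ?_⟩, fun j => ⟨σ.symm j, ?_, fun i hi => ?_⟩⟩
  · rw [hS]
    split_ifs
    · rcases Int.units_eq_one_or (s i) with h | h <;> simp [h]
    · exact Or.inl rfl
  all_goals simp_all [← Equiv.eq_symm_apply]

theorem IsSignedPerm.mul (hS : IsSignedPerm S) (hT : IsSignedPerm T) : IsSignedPerm (S * T) := by
  obtain ⟨σ, s, hσ⟩ := hS.exists_mulVec_eq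
  obtain ⟨τ, t, hτ⟩ := hT.exists_mulVec_eq
  refine isSignedPerm_of_mulVec_eq (σ.trans τ) (fun i => s i * t (σ i)) fun x => ?_
  rw [← mulVec_mulVec, hσ, hτ]
  funext i
  simp [mul_assoc]

theorem isSignedPerm_one : IsSignedPerm (1 : Matrix (Fin n) (Fin n) ℝ) :=
  isSignedPerm_of_mulVec_eq 1 1 fun x => by simp

theorem IsSignedPerm.pow (hS : IsSignedPerm S) (k : ℕ) : IsSignedPerm (S ^ k) := by
  induction k with
  | zero => exact isSignedPerm_one
  | succ k ih => exact pow_succ S k ▸ ih.mul hS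

theorem IsSignedPerm.mulVec_dotProduct_mulVec (hS : IsSignedPerm S) (x y : Fin n → ℝ) :
    S *ᵥ x ⬝ᵥ S *ᵥ y = x ⬝ᵥ y := by
  obtain ⟨σ, s, hσ⟩ := hS.exists_mulVec_eq
  have hs : ∀ i, ((s i : ℤ) : ℝ) * ((s i : ℤ) : ℝ) = 1 := fun i => by
    rw [← Int.cast_mul, ← Units.val_mul, Int.units_mul_self, Units.val_one, Int.cast_one]
  simp only [hσ, dotProduct]
  calc ∑ i, (s i : ℝ) * x (σ i) * ((s i : ℝ) * y (σ i))
      = ∑ i, ((s i : ℝ) * (s i : ℝ)) * (x (σ i) * y (σ i)) := by congr! 1; ring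
    _ = ∑ i, x i * y i := by simp only [hs, one_mul]; exact Equiv.sum_comp σ fun i => x i * y i

theorem IsSignedPerm.exists_mulVec_intCast (hS : IsSignedPerm S) (z : Fin n → ℤ) :
    ∃ w : Fin n → ℤ, S *ᵥ (fun i => (z i : ℝ)) = fun i => (w i : ℝ) := by
  obtain ⟨σ, s, hσ⟩ := hS.exists_mulVec_eq
  exact ⟨fun i => s i * z (σ i), by rw [hσ]; push_cast; rfl⟩

theorem IsSignedPerm.exists_mulVec_single (hS : IsSignedPerm S) (j : Fin n) (t : ℝ) :
    ∃ a ε, |ε| = 1 ∧ S *ᵥ Pi.single j t = Pi.single a (ε * t) := by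
  obtain ⟨σ, s, hσ⟩ := hS.exists_mulVec_eq
  refine ⟨σ.symm j, s (σ.symm j), ?_, ?_⟩
  · rcases Int.units_eq_one_or (s (σ.symm j)) with h | h <;> simp [h]
  · rw [hσ]
    funext i
    by_cases hi : i = σ.symm j
    · subst hi; simp
    · simp [hi, ← Equiv.eq_symm_apply]

end SignedPerm

section CycGen

variable {n : ℕ}

theorem cycGen_apply_self (hn : 2 ≤ n) (i : Fin n) : cycGen n i i = 0 := by
  simp only [cycGen, Matrix.of_apply]
  rw [if_neg (by omega), if_neg (by omega)]

theorem isSignedPerm_cycGen : IsSignedPerm (cycGen n) := by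
  rcases n with _ | m
  · exact isSignedPerm_of_mulVec_eq 1 1 fun x => funext fun i => i.elim0
  refine isSignedPerm_of_mulVec_eq (finRotate (m + 1)).symm
    (fun i => if (i : ℕ) = 0 then -1 else 1) (mulVec_eq_of_apply_eq fun i j => ?_)
  simp only [cycGen, Matrix.of_apply, Equiv.symm_apply_eq, Fin.ext_iff, coe_finRotate,
    Fin.val_last]
  split_ifs <;> simp_all
  omega

theorem cycGen_mulVec_single {j : ℕ} (hj : j + 1 < n) :
    cycGen n *ᵥ Pi.single ⟨j, by omega⟩ 1 = Pi.single ⟨j + 1, hj⟩ 1 := by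
  funext i
  simp only [mulVec_single_one, col_apply, cycGen, Matrix.of_apply, Pi.single_apply, Fin.ext_iff]
  split_ifs <;> first | rfl | omega

end CycGen

section CycGenPow

variable {n : ℕ} [NeZero n] {S T : Matrix (Fin n) (Fin n) ℝ}

theorem cycGen_mulVec_single_last :
    cycGen n *ᵥ Pi.single ⟨n - 1, Nat.sub_one_lt (NeZero.ne n)⟩ 1 = -Pi.single 0 1 := by
  funext i
  have := i.isLt
  simp only [mulVec_single_one, col_apply, cycGen, Matrix.of_apply, Pi.neg_apply,
    Pi.single_apply, Fin.ext_iff, Fin.val_zero, and_true]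
  split_ifs <;> first | omega | norm_num

theorem cycGen_pow_mulVec_single_zero {k : ℕ} (hk : k < n) :
    cycGen n ^ k *ᵥ Pi.single 0 1 = Pi.single ⟨k, hk⟩ 1 := by
  induction k with
  | zero => rw [pow_zero, one_mulVec]; rfl
  | succ k ih => rw [pow_succ', ← mulVec_mulVec, ih (by omega), cycGen_mulVec_single]

theorem eq_of_commute_cycGen (hS : Commute S (cycGen n)) (hT : Commute T (cycGen n))
    (h : S *ᵥ Pi.single 0 1 = T *ᵥ Pi.single 0 1) : S = T := by
  refine ext_of_mulVec_single fun j => ?_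
  rw [← cycGen_pow_mulVec_single_zero j.isLt, mulVec_mulVec, mulVec_mulVec,
    (hS.pow_right j).eq, (hT.pow_right j).eq, ← mulVec_mulVec, ← mulVec_mulVec, h]

theorem cycGen_pow_self : cycGen n ^ n = -1 := by
  refine eq_of_commute_cycGen (Commute.self_pow _ n).symm (Commute.neg_one_left _) ?_
  calc cycGen n ^ n *ᵥ Pi.single 0 1
      = cycGen n *ᵥ (cycGen n ^ (n - 1) *ᵥ Pi.single 0 1) := by
        rw [mulVec_mulVec, ← pow_succ', Nat.sub_add_cancel NeZero.one_le]
    _ = (-1 : Matrix (Fin n) (Fin n) ℝ) *ᵥ Pi.single 0 1 := by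
        rw [cycGen_pow_mulVec_single_zero (Nat.sub_one_lt (NeZero.ne n)),
          cycGen_mulVec_single_last, neg_mulVec, one_mulVec]

theorem cycGen_pow_two_mul : cycGen n ^ (2 * n) = 1 := by
  rw [mul_comm, pow_mul, cycGen_pow_self, neg_one_sq]

theorem cycGen_pow_ne_one {m : ℕ} (hm0 : 0 < m) (hm : m < 2 * n) : cycGen n ^ m ≠ 1 := by
  intro h
  have h0 := congrArg (· *ᵥ Pi.single (0 : Fin n) (1 : ℝ)) h
  simp only [one_mulVec] at h0
  rcases lt_or_ge m n with hmn | hmn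
  · rw [cycGen_pow_mulVec_single_zero hmn] at h0
    have := congrFun h0 ⟨m, hmn⟩
    simp [Fin.ext_iff, hm0.ne'] at this
  · rw [← Nat.sub_add_cancel hmn, pow_add, cycGen_pow_self, mul_neg_one, neg_mulVec,
      cycGen_pow_mulVec_single_zero (by omega)] at h0
    have := congrFun h0 0
    simp only [Pi.neg_apply, Pi.single_apply] at this
    split_ifs at this <;> norm_num at this

theorem cycGen_mulVec_dotProduct_lt {x : Fin n → ℝ} (hx : x ≠ 0) :
    x ⬝ᵥ cycGen n *ᵥ x < x ⬝ᵥ x := by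
  have hfix : cycGen n *ᵥ x ≠ x := by
    intro h
    have hpow : ∀ k, cycGen n ^ k *ᵥ x = x := fun k => by
      induction k with
      | zero => rw [pow_zero, one_mulVec]
      | succ k ih => rw [pow_succ, ← mulVec_mulVec, h, ih]
    have := hpow n
    rw [cycGen_pow_self, neg_mulVec, one_mulVec, neg_eq_self] at this
    exact hx this
  have hpos : 0 < (x - cycGen n *ᵥ x) ⬝ᵥ (x - cycGen n *ᵥ x) :=
    lt_of_le_of_ne (Finset.sum_nonneg fun i _ => mul_self_nonneg _)
      (Ne.symm (dotProduct_self_eq_zero.not.mpr (sub_ne_zero.mpr hfix.symm)))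
  rw [sub_dotProduct, dotProduct_sub, dotProduct_sub, dotProduct_comm (cycGen n *ᵥ x) x,
    isSignedPerm_cycGen.mulVec_dotProduct_mulVec] at hpos
  linarith

theorem IsSignedPerm.exists_eq_cycGen_pow (hS : IsSignedPerm S) (hSC : Commute S (cycGen n)) :
    ∃ k, k < 2 * n ∧ S = cycGen n ^ k := by
  obtain ⟨a, ε, hε, ha⟩ := hS.exists_mulVec_single 0 1
  have hpow : ∀ k, Commute (cycGen n ^ k) (cycGen n) := fun k => (Commute.self_pow _ k).symm
  rcases (abs_eq zero_le_one).mp hε with rfl | rfl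
  · refine ⟨a, by omega, eq_of_commute_cycGen hSC (hpow a) ?_⟩
    rw [ha, cycGen_pow_mulVec_single_zero a.isLt, one_mul]
  · refine ⟨a + n, by omega, eq_of_commute_cycGen hSC (hpow (a + n)) ?_⟩
    rw [ha, pow_add, cycGen_pow_self, mul_neg_one, neg_mulVec,
      cycGen_pow_mulVec_single_zero a.isLt, neg_one_mul, Pi.single_neg]

end CycGenPow

section TilingMatrix

variable {p q : ℝ} {n : ℕ}

theorem tilingMatrix_eq (hn : 2 ≤ n) : tilingMatrix p q n = q • 1 - p • cycGen n := by
  ext i j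
  simp only [tilingMatrix, cycGen, Matrix.of_apply, Matrix.sub_apply, Matrix.smul_apply,
    Matrix.one_apply, smul_eq_mul, Fin.ext_iff]
  split_ifs <;> first | omega | ring

theorem tilingMatrix_mulVec (hn : 2 ≤ n) (x : Fin n → ℝ) :
    tilingMatrix p q n *ᵥ x = q • x - p • cycGen n *ᵥ x := by
  rw [tilingMatrix_eq hn, sub_mulVec, smul_mulVec, smul_mulVec, one_mulVec]

theorem commute_cycGen_tilingMatrix (hn : 2 ≤ n) : Commute (cycGen n) (tilingMatrix p q n) := by
  rw [tilingMatrix_eq hn]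
  exact ((Commute.one_right _).smul_right q).sub_right ((Commute.refl _).smul_right p)

theorem tilingMatrix_mulVec_dotProduct_self (hn : 2 ≤ n) (x : Fin n → ℝ) :
    tilingMatrix p q n *ᵥ x ⬝ᵥ tilingMatrix p q n *ᵥ x
      = (p ^ 2 + q ^ 2) * (x ⬝ᵥ x) - 2 * p * q * (x ⬝ᵥ cycGen n *ᵥ x) := by
  simp only [tilingMatrix_mulVec hn, sub_dotProduct, dotProduct_sub, smul_dotProduct,
    dotProduct_smul, smul_eq_mul, dotProduct_comm (cycGen n *ᵥ x) x,
    isSignedPerm_cycGen.mulVec_dotProduct_mulVec]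
  ring

theorem single_dotProduct_cycGen_mulVec_single (hn : 2 ≤ n) (j : Fin n) (t u : ℝ) :
    Pi.single j t ⬝ᵥ cycGen n *ᵥ Pi.single j u = 0 := by
  simp [mulVec_single, cycGen_apply_self hn]

end TilingMatrix

section Lattice

variable {p q : ℝ} {n : ℕ} {S : Matrix (Fin n) (Fin n) ℝ}

theorem exists_eq_single_of_tilingMatrix_mulVec_dotProduct_self (hq : 0 < q) (hqp : q < p)
    (hn : 2 ≤ n) {z : Fin n → ℤ}
    (h : tilingMatrix p q n *ᵥ (fun i => (z i : ℝ)) ⬝ᵥ tilingMatrix p q n *ᵥ (fun i => (z i : ℝ))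
      = p ^ 2 + q ^ 2) :
    ∃ k η, |η| = 1 ∧ (fun i => (z i : ℝ)) = Pi.single k η := by
  have : NeZero n := ⟨by omega⟩
  set x : Fin n → ℝ := fun i => (z i : ℝ)
  have hx : x ≠ 0 := by
    rintro hx
    rw [hx, mulVec_zero, dotProduct_zero] at h
    nlinarith
  obtain ⟨w, hw⟩ := isSignedPerm_cycGen.exists_mulVec_intCast (n := n) z
  have hN : x ⬝ᵥ x = ((z ⬝ᵥ z : ℤ) : ℝ) := by simp [x, dotProduct]
  have hM : x ⬝ᵥ cycGen n *ᵥ x = ((z ⬝ᵥ w : ℤ) : ℝ) := by rw [hw]; simp [x, dotProduct]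
  -- both sides are integers, so the strict inequality gains a whole unit
  have hMN : z ⬝ᵥ w + 1 ≤ z ⬝ᵥ z := by
    have := cycGen_mulVec_dotProduct_lt hx
    rw [hN, hM] at this
    exact_mod_cast this
  have hN1 : 1 ≤ z ⬝ᵥ z := by
    have : z ≠ 0 := fun hz => hx (by simp [x, hz]; rfl)
    have hnn : 0 ≤ z ⬝ᵥ z := Finset.sum_nonneg fun i _ => mul_self_nonneg (z i)
    have := dotProduct_self_eq_zero.not.mpr this
    omega
  have hN2 : z ⬝ᵥ z ≤ 1 := by
    by_contra! hN2
    have hN2' : (2 : ℝ) ≤ ((z ⬝ᵥ z : ℤ) : ℝ) := by exact_mod_cast hN2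
    have hMN' : ((z ⬝ᵥ w : ℤ) : ℝ) ≤ ((z ⬝ᵥ z : ℤ) : ℝ) - 1 := by
      rw [le_sub_iff_add_le]; exact_mod_cast hMN
    rw [tilingMatrix_mulVec_dotProduct_self hn, hN, hM] at h
    nlinarith [mul_nonneg (mul_pos (hq.trans hqp) hq).le (sub_nonneg.mpr hMN'),
      mul_nonneg (sq_nonneg (p - q)) (sub_nonneg.mpr hN2'), sq_pos_of_pos (sub_pos.mpr hqp)]
  obtain ⟨k, hk, hzk⟩ := exists_eq_single_of_dotProduct_self_eq_one (le_antisymm hN2 hN1)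
  refine ⟨k, z k, by exact_mod_cast hk, funext fun i => ?_⟩
  rw [show x i = (z i : ℝ) from rfl, hzk]
  by_cases hi : i = k <;> simp [hi]

theorem tilingMatrix_mulVec_single_mem_latticeA (j : Fin n) :
    tilingMatrix p q n *ᵥ Pi.single j 1 ∈ latticeA p q n :=
  ⟨Pi.single j 1, by congr 1; funext i; by_cases hi : i = j <;> simp [hi]⟩

theorem IsSignedPerm.mulVec_mem_latticeA (hS : IsSignedPerm S)
    (hSA : Commute S (tilingMatrix p q n)) {x : Fin n → ℝ} (hx : x ∈ latticeA p q n) :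
    S *ᵥ x ∈ latticeA p q n := by
  obtain ⟨z, rfl⟩ := hx
  obtain ⟨w, hw⟩ := hS.exists_mulVec_intCast z
  exact ⟨w, by rw [mulVec_mulVec, hSA.eq, ← mulVec_mulVec, hw]⟩

theorem cycGen_pow_mulVec_mem_latticeA_iff (hn : 2 ≤ n) (k : ℕ) {x : Fin n → ℝ} :
    cycGen n ^ k *ᵥ x ∈ latticeA p q n ↔ x ∈ latticeA p q n := by
  have : NeZero n := ⟨by omega⟩
  have hpow (m : ℕ) {y : Fin n → ℝ} (hy : y ∈ latticeA p q n) :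
      cycGen n ^ m *ᵥ y ∈ latticeA p q n :=
    (isSignedPerm_cycGen.pow m).mulVec_mem_latticeA
      ((commute_cycGen_tilingMatrix hn).pow_left m) hy
  refine ⟨fun h => ?_, hpow k⟩
  have := hpow ((2 * n - 1) * k) h
  rwa [mulVec_mulVec, ← pow_add, ← Nat.succ_mul, Nat.succ_eq_add_one,
    Nat.sub_add_cancel (by omega), pow_mul, cycGen_pow_two_mul, one_pow, one_mulVec] at this

end Lattice

theorem IsSignedPerm.commute_cycGen {p q : ℝ} {n : ℕ} {S : Matrix (Fin n) (Fin n) ℝ}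
    (hq : 0 < q) (hqp : q < p) (hn : 2 ≤ n) (hS : IsSignedPerm S)
    (hL : Set.MapsTo (S *ᵥ ·) (latticeA p q n) (latticeA p q n)) : Commute S (cycGen n) := by
  refine ext_of_mulVec_single fun j => ?_
  rw [← mulVec_mulVec, ← mulVec_mulVec]
  obtain ⟨z, hz⟩ := hL (tilingMatrix_mulVec_single_mem_latticeA (p := p) (q := q) j)
  simp only at hz
  obtain ⟨c, η, hη, hzc⟩ := exists_eq_single_of_tilingMatrix_mulVec_dotProduct_self hq hqp hn
    (z := z) (by
      rw [← hz, hS.mulVec_dotProduct_mulVec, tilingMatrix_mulVec_dotProduct_self hn,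
        single_dotProduct_cycGen_mulVec_single hn]
      simp)
  obtain ⟨b, δ, hδ, hb⟩ := isSignedPerm_cycGen.exists_mulVec_single j 1
  obtain ⟨a, ε, hε, ha⟩ := hS.exists_mulVec_single j 1
  obtain ⟨a', ε', hε', ha'⟩ := hS.exists_mulVec_single b δ
  obtain ⟨d, θ, hθ, hd⟩ := isSignedPerm_cycGen.exists_mulVec_single c η
  rw [mul_one] at ha hb
  have hne : ∀ r : ℝ, |r| = 1 → r ≠ 0 := fun r hr h0 => by simp [h0] at hr
  have hε'δ : |ε' * δ| = 1 := by rw [abs_mul, hε', hδ, one_mul]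
  have hθη : |θ * η| = 1 := by rw [abs_mul, hθ, hη, one_mul]
  have haa' : a ≠ a' := by
    refine ne_of_single_dotProduct_single_eq_zero (hne ε hε) (hne _ hε'δ) ?_
    rw [← ha, ← ha', ← hb, hS.mulVec_dotProduct_mulVec, single_dotProduct_cycGen_mulVec_single hn]
  have hcd : c ≠ d := by
    refine ne_of_single_dotProduct_single_eq_zero (hne η hη) (hne _ hθη) ?_
    rw [← hd, single_dotProduct_cycGen_mulVec_single hn]
  rw [tilingMatrix_mulVec hn, tilingMatrix_mulVec hn, mulVec_sub, mulVec_smul, mulVec_smul, hb,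
    ha, ha', hzc, hd] at hz
  obtain ⟨h1, h2⟩ := single_eq_of_smul_sub_smul_single_eq hq hqp hε hθη haa' hcd hz
  rw [hb, ha', h2, ha, h1, hd]

/-- The stabilizer of the lattice `A·ℤⁿ` inside the hyperoctahedral group is the
cyclic group of order `2n` generated by `S₀`. -/
theorem stabilizer_cyclic (p q : ℝ) (hq : 0 < q) (hqp : q < p) (n : ℕ) (hn : 2 ≤ n) :
    (∀ S : Matrix (Fin n) (Fin n) ℝ,
      (IsSignedPerm S ∧ ∀ x : Fin n → ℝ, x ∈ latticeA p q n ↔ S.mulVec x ∈ latticeA p q n) ↔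
        ∃ k : ℕ, k < 2 * n ∧ S = cycGen n ^ k) ∧
      cycGen n ^ (2 * n) = 1 ∧
      ∀ m : ℕ, 0 < m → m < 2 * n → cycGen n ^ m ≠ 1 := by
  have : NeZero n := ⟨by omega⟩
  refine ⟨fun S => ⟨fun ⟨hS, hL⟩ => ?_, ?_⟩, cycGen_pow_two_mul,
    fun m hm0 hm => cycGen_pow_ne_one hm0 hm⟩
  · exact hS.exists_eq_cycGen_pow (hS.commute_cycGen hq hqp hn fun x hx => (hL x).mp hx)
  · rintro ⟨k, -, rfl⟩
    exact ⟨isSignedPerm_cycGen.pow k, fun x => (cycGen_pow_mulVec_mem_latticeA_iff hn k).symm⟩
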